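/- For every λ ∈ ℂ, the following are equivalent: (a) d₀(λ) is surjective and ker d₀(λ) = ran d₁(λ); (b) the induced operator x̄ − λ : H/R(y) → H/R(y) is bijective and the restriction of x−1−λ to ker(y) is surjective onto ker(y). (Equivalently, σ_{δ,1}((y,x),H) = {0} × (Sp(x̄, H/R(y)) ∪ ΠC(x−1, ker y)), where ΠC denotes the approximate compression spectrum.) -/

import Mathlib

/-- The operator induced on the quotient `H ⧸ S` by an operator leaving `S` invariant. -/
noncomputable def inducedOnQuotient {H : Type*} [NormedAddCommGroup H] [NormedSpace ℂ H]
    (S : Submodule ℂ H) (x : H →L[ℂ] H) (hx : ∀ v ∈ S, x v ∈ S) :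
    (H ⧸ S) →L[ℂ] (H ⧸ S) where
  toLinearMap := Submodule.mapQ S S (x : H →ₗ[ℂ] H) (fun v hv => hx v hv)
  cont := by
    show Continuous (⇑(Submodule.mapQ S S (x : H →ₗ[ℂ] H) fun v hv => hx v hv))
    rw [← S.isOpenQuotientMap_mkQ.continuous_comp_iff]
    have h : (⇑(Submodule.mapQ S S (x : H →ₗ[ℂ] H) fun v hv => hx v hv)) ∘ ⇑S.mkQ
        = ⇑S.mkQ ∘ ⇑x := by
      funext v
      simp [Submodule.mapQ_apply]
    rw [h]
    exact S.isOpenQuotientMap_mkQ.continuous.comp x.continuous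

/-! The identity `y (x - 1 - λ) = (x - λ) y`, a rewriting of `[y, x] = y`, makes `(C, d(λ))` a
complex and lets `x - λ` descend to `H ⧸ R(y)`. Exactness at the right end says that every
`c` is `y a + (x - λ) b`, i.e. that `x̄ - λ` is onto. In the middle, `(a, b) ∈ ker d₀(λ)` forces
`(x̄ - λ)[b] = 0`; so exactness there needs `x̄ - λ` injective (to get `b = y c`), after which
`a + (x - 1 - λ) c ∈ ker y` must be absorbed by a change of `c` within `ker y`, which is exactly
surjectivity of `x - 1 - λ` on `ker y`. -/

open LinearMap

theorem comp_sub_one_sub_smul_eq_sub_smul_comp {R M : Type*} [CommRing R] [AddCommGroup M]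
    [Module R M] {x y : M →ₗ[R] M} (hcomm : y ∘ₗ x - x ∘ₗ y = y) (l : R) :
    y ∘ₗ (x - 1 - l • 1) = (x - l • 1) ∘ₗ y := by
  rw [sub_eq_iff_eq_add] at hcomm
  rw [LinearMap.comp_sub, LinearMap.comp_sub, hcomm, LinearMap.sub_comp, LinearMap.comp_smul,
    LinearMap.smul_comp]
  simp only [LinearMap.comp_id, LinearMap.id_comp, Module.End.one_eq_id]
  abel

section KoszulComplex

variable {R M : Type*} [Ring R] [AddCommGroup M] [Module R M] {y A B : M →ₗ[R] M}

theorem surjective_coprod_iff_surjective_mapQ (hB : range y ≤ (range y).comap B) :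
    Function.Surjective (y.coprod B) ↔ Function.Surjective ((range y).mapQ (range y) B hB) := by
  constructor
  · intro hsurj q
    obtain ⟨c, rfl⟩ := (range y).mkQ_surjective q
    obtain ⟨⟨a, b⟩, hab⟩ := hsurj c
    refine ⟨(range y).mkQ b, (Submodule.Quotient.eq _).2 ⟨-a, ?_⟩⟩
    rw [← hab, coprod_apply, map_neg]
    abel
  · intro hsurj c
    obtain ⟨q, hq⟩ := hsurj ((range y).mkQ c)
    obtain ⟨b, rfl⟩ := (range y).mkQ_surjective q
    obtain ⟨a, ha⟩ := (Submodule.Quotient.eq _).1 hq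
    refine ⟨(-a, b), ?_⟩
    rw [coprod_apply, map_neg, ha]
    abel

theorem range_le_comap_range_of_comp_eq (h : y ∘ₗ A = B ∘ₗ y) :
    range y ≤ (range y).comap B := by
  rintro _ ⟨c, rfl⟩
  exact ⟨A c, LinearMap.congr_fun h c⟩

theorem range_prod_le_ker_coprod (h : y ∘ₗ A = B ∘ₗ y) :
    range ((-A).prod y) ≤ ker (y.coprod B) := by
  rintro _ ⟨c, rfl⟩
  change y (-A c) + B (y c) = 0
  rw [map_neg, ← LinearMap.comp_apply y A, h, LinearMap.comp_apply, neg_add_cancel]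

theorem injective_mapQ_of_ker_coprod_le (hB : range y ≤ (range y).comap B)
    (hker : ker (y.coprod B) ≤ range ((-A).prod y)) :
    Function.Injective ((range y).mapQ (range y) B hB) := by
  rw [← LinearMap.ker_eq_bot, eq_bot_iff]
  intro q hq
  obtain ⟨b, rfl⟩ := (range y).mkQ_surjective q
  obtain ⟨a, ha⟩ := (Submodule.Quotient.mk_eq_zero _).1 hq
  obtain ⟨c, hc⟩ := hker (show (-a, b) ∈ ker (y.coprod B) by
    simp [ha])
  exact (Submodule.Quotient.mk_eq_zero _).2 ⟨c, congrArg Prod.snd hc⟩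

theorem surjOn_ker_of_ker_coprod_le (hker : ker (y.coprod B) ≤ range ((-A).prod y)) :
    Set.SurjOn A (ker y) (ker y) := by
  intro k hk
  obtain ⟨c, hc⟩ := hker (show (-k, 0) ∈ ker (y.coprod B) by
    simpa using hk)
  exact ⟨c, congrArg Prod.snd hc, neg_injective (congrArg Prod.fst hc)⟩

theorem ker_coprod_le_of_injective_of_surjOn (h : y ∘ₗ A = B ∘ₗ y)
    (hinj : Function.Injective ((range y).mapQ (range y) B (range_le_comap_range_of_comp_eq h)))
    (hsurj : Set.SurjOn A (ker y) (ker y)) :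
    ker (y.coprod B) ≤ range ((-A).prod y) := by
  rintro ⟨a, b⟩ hab
  rw [mem_ker, coprod_apply] at hab
  obtain ⟨c, rfl⟩ : b ∈ range y := by
    refine (Submodule.Quotient.mk_eq_zero _).1 (hinj.eq_iff' (map_zero _) |>.1 ?_)
    exact (Submodule.Quotient.mk_eq_zero _).2 ⟨-a, by rw [map_neg, neg_eq_iff_add_eq_zero, hab]⟩
  obtain ⟨k, hk, hAk⟩ := hsurj (show a + A c ∈ ker y by
    rw [mem_ker, map_add, ← LinearMap.comp_apply y A, h, LinearMap.comp_apply, hab])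
  refine ⟨c - k, Prod.ext ?_ ?_⟩
  · change -A (c - k) = a
    rw [map_sub, hAk]
    abel
  · change y (c - k) = y c
    rw [map_sub, mem_ker.1 hk, sub_zero]

theorem ker_coprod_eq_range_prod_iff (h : y ∘ₗ A = B ∘ₗ y) :
    ker (y.coprod B) = range ((-A).prod y) ↔
      Function.Injective ((range y).mapQ (range y) B (range_le_comap_range_of_comp_eq h)) ∧
        Set.SurjOn A (ker y) (ker y) :=
  ⟨fun hker => ⟨injective_mapQ_of_ker_coprod_le _ hker.le, surjOn_ker_of_ker_coprod_le hker.le⟩,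
    fun ⟨hinj, hsurj⟩ => (ker_coprod_le_of_injective_of_surjOn h hinj hsurj).antisymm
      (range_prod_le_ker_coprod h)⟩

theorem surjective_coprod_and_ker_eq_range_iff (h : y ∘ₗ A = B ∘ₗ y) :
    (Function.Surjective (y.coprod B) ∧ ker (y.coprod B) = range ((-A).prod y)) ↔
      Function.Bijective ((range y).mapQ (range y) B (range_le_comap_range_of_comp_eq h)) ∧
        Set.SurjOn A (ker y) (ker y) := by
  rw [surjective_coprod_iff_surjective_mapQ (range_le_comap_range_of_comp_eq h),
    ker_coprod_eq_range_prod_iff h, Function.Bijective]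
  tauto

end KoszulComplex

theorem sigma_delta_one_characterization_general
    {H : Type*} [NormedAddCommGroup H] [InnerProductSpace ℂ H]
    (x y : H →L[ℂ] H) (hcomm : y ∘L x - x ∘L y = y)
    (hran : ∀ v ∈ LinearMap.range (y : H →ₗ[ℂ] H), x v ∈ LinearMap.range (y : H →ₗ[ℂ] H)) :
    ∀ l : ℂ,
      (Function.Surjective ⇑(y.coprod (x - l • (1 : H →L[ℂ] H))) ∧
          LinearMap.ker (y.coprod (x - l • (1 : H →L[ℂ] H)) : H × H →ₗ[ℂ] H) =
            LinearMap.range ((-(x - 1 - l • (1 : H →L[ℂ] H))).prod y : H →ₗ[ℂ] H × H)) ↔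
        (Function.Bijective
            (fun v : H ⧸ LinearMap.range (y : H →ₗ[ℂ] H) =>
              inducedOnQuotient (LinearMap.range (y : H →ₗ[ℂ] H)) x hran v - l • v) ∧
          Set.SurjOn ⇑(x - 1 - l • (1 : H →L[ℂ] H))
            (LinearMap.ker (y : H →ₗ[ℂ] H) : Set H) (LinearMap.ker (y : H →ₗ[ℂ] H) : Set H)) := by
  intro l
  have hcomm' : (y : H →ₗ[ℂ] H) ∘ₗ (x : H →ₗ[ℂ] H) - (x : H →ₗ[ℂ] H) ∘ₗ (y : H →ₗ[ℂ] H) = y := by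
    simpa using congrArg ContinuousLinearMap.toLinearMap hcomm
  have h : (y : H →ₗ[ℂ] H) ∘ₗ ↑(x - 1 - l • (1 : H →L[ℂ] H)) =
      ↑(x - l • (1 : H →L[ℂ] H)) ∘ₗ (y : H →ₗ[ℂ] H) := by
    simpa using comp_sub_one_sub_smul_eq_sub_smul_comp hcomm' l
  have hquot : (fun v : H ⧸ LinearMap.range (y : H →ₗ[ℂ] H) =>
      inducedOnQuotient (LinearMap.range (y : H →ₗ[ℂ] H)) x hran v - l • v) =
      ⇑((range (y : H →ₗ[ℂ] H)).mapQ _ _ (range_le_comap_range_of_comp_eq h)) := by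
    funext q
    induction q using Submodule.Quotient.induction_on
    rfl
  rw [hquot]
  exact surjective_coprod_and_ker_eq_range_iff h

/-- Let `H` be a complex Hilbert space, `x, y` bounded operators on `H`
with `y ∘ x - x ∘ y = y` and `R(y)` closed.  For every `λ ∈ ℂ` the following are
equivalent: (a) `d₀(λ)` is surjective and `ker d₀(λ) = ran d₁(λ)`; (b) the operator
`x̄ - λ` induced on `H ⧸ R(y)` is bijective and the restriction of `x - 1 - λ` to
`ker y` maps `ker y` onto `ker y`.
(Equivalently, `σ_{δ,1}((y,x),H) = {0} × (Sp(x̄, H ⧸ R(y)) ∪ ΠC(x-1, ker y))`.) -/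
theorem sigma_delta_one_characterization
    {H : Type*} [NormedAddCommGroup H] [InnerProductSpace ℂ H] [CompleteSpace H]
    (x y : H →L[ℂ] H) (hcomm : y ∘L x - x ∘L y = y)
    (hclosed : IsClosed ((LinearMap.range (y : H →ₗ[ℂ] H) : Submodule ℂ H) : Set H))
    (hran : ∀ v ∈ LinearMap.range (y : H →ₗ[ℂ] H), x v ∈ LinearMap.range (y : H →ₗ[ℂ] H)) :
    ∀ l : ℂ,
      (Function.Surjective ⇑(y.coprod (x - l • (1 : H →L[ℂ] H))) ∧
          LinearMap.ker (y.coprod (x - l • (1 : H →L[ℂ] H)) : H × H →ₗ[ℂ] H) =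
            LinearMap.range ((-(x - 1 - l • (1 : H →L[ℂ] H))).prod y : H →ₗ[ℂ] H × H)) ↔
        (Function.Bijective
            (fun v : H ⧸ LinearMap.range (y : H →ₗ[ℂ] H) =>
              inducedOnQuotient (LinearMap.range (y : H →ₗ[ℂ] H)) x hran v - l • v) ∧
          Set.SurjOn ⇑(x - 1 - l • (1 : H →L[ℂ] H))
            (LinearMap.ker (y : H →ₗ[ℂ] H) : Set H) (LinearMap.ker (y : H →ₗ[ℂ] H) : Set H)) :=
  sigma_delta_one_characterization_general x y hcomm hran
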